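/- Let G be a simple graph on Fin n (n ≥ 3) such that for every i, vertices i and i+1 (mod n) are adjacent. Then for any two distinct vertices u and v of G, there exist two paths from u to v in G that are internally vertex-disjoint. -/

import Mathlib

open Fin.NatCast Fin.CommRing

private def walkUp {n : ℕ} [NeZero n] {G : SimpleGraph (Fin n)}
    (h : ∀ i : Fin n, G.Adj i (i + 1)) :
    (m : ℕ) → (a : Fin n) → G.Walk a (a + (m : Fin n))
  | 0, a => SimpleGraph.Walk.nil.copy rfl (by simp)
  | m + 1, a => (SimpleGraph.Walk.cons (h a) (walkUp h m (a + 1))).copy rfl (by push_cast; ring)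

private def walkDown {n : ℕ} [NeZero n] {G : SimpleGraph (Fin n)}
    (h : ∀ i : Fin n, G.Adj i (i + 1)) :
    (m : ℕ) → (a : Fin n) → G.Walk a (a - (m : Fin n))
  | 0, a => SimpleGraph.Walk.nil.copy rfl (by simp)
  | m + 1, a => (SimpleGraph.Walk.cons (by simpa using (h (a - 1)).symm) (walkDown h m (a - 1))).copy
      rfl (by push_cast; ring)

private lemma walkUp_support {n : ℕ} [NeZero n] {G : SimpleGraph (Fin n)}
    (h : ∀ i : Fin n, G.Adj i (i + 1)) (m : ℕ) (a : Fin n) :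
    (walkUp h m a).support = (List.range (m + 1)).map (fun j : ℕ => a + (j : Fin n)) := by
  induction m generalizing a with
  | zero => simp [walkUp, List.range_succ]
  | succ m ih =>
    have hfun : ((fun j : ℕ => a + (j : Fin n)) ∘ Nat.succ) = fun j : ℕ => (a + 1) + (j : Fin n) := by
      funext j
      simp only [Function.comp_apply]
      push_cast; ring
    simp only [walkUp, SimpleGraph.Walk.support_copy, SimpleGraph.Walk.support_cons, ih,
      List.range_succ_eq_map, List.map_cons, List.map_map, hfun]
    simp
    intro j _
    ring

private lemma walkDown_support {n : ℕ} [NeZero n] {G : SimpleGraph (Fin n)}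
    (h : ∀ i : Fin n, G.Adj i (i + 1)) (m : ℕ) (a : Fin n) :
    (walkDown h m a).support = (List.range (m + 1)).map (fun j : ℕ => a - (j : Fin n)) := by
  induction m generalizing a with
  | zero => simp [walkDown, List.range_succ]
  | succ m ih =>
    have hfun : ((fun j : ℕ => a - (j : Fin n)) ∘ Nat.succ) = fun j : ℕ => (a - 1) - (j : Fin n) := by
      funext j
      simp only [Function.comp_apply]
      push_cast; ring
    simp only [walkDown, SimpleGraph.Walk.support_copy, SimpleGraph.Walk.support_cons, ih,
      List.range_succ_eq_map, List.map_cons, List.map_map, hfun]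
    simp
    intro j _
    ring

private lemma cast_inj_of_lt {n : ℕ} [NeZero n] {j j' : ℕ} (hj : j < n) (hj' : j' < n)
    (h : (j : Fin n) = (j' : Fin n)) : j = j' := by
  have := congrArg Fin.val h
  rwa [Fin.val_cast_of_lt hj, Fin.val_cast_of_lt hj'] at this

private lemma walkUp_isPath {n : ℕ} [NeZero n] {G : SimpleGraph (Fin n)}
    (h : ∀ i : Fin n, G.Adj i (i + 1)) {m : ℕ} (hm : m < n) (a : Fin n) :
    (walkUp h m a).IsPath := by
  rw [SimpleGraph.Walk.isPath_def, walkUp_support]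
  refine (List.nodup_range (n := m + 1)).map_on ?_
  intro j hj j' hj' hjj
  simp only [List.mem_range] at hj hj'
  exact cast_inj_of_lt (by omega) (by omega) (add_left_cancel hjj)

private lemma walkDown_isPath {n : ℕ} [NeZero n] {G : SimpleGraph (Fin n)}
    (h : ∀ i : Fin n, G.Adj i (i + 1)) {m : ℕ} (hm : m < n) (a : Fin n) :
    (walkDown h m a).IsPath := by
  rw [SimpleGraph.Walk.isPath_def, walkDown_support]
  refine (List.nodup_range (n := m + 1)).map_on ?_
  intro j hj j' hj' hjj
  simp only [List.mem_range] at hj hj'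
  exact cast_inj_of_lt (by omega) (by omega) (sub_right_injective hjj)

theorem stmt_9 (n : ℕ) [NeZero n] (hn : 3 ≤ n) (G : SimpleGraph (Fin n))
    (hcyc : ∀ i : Fin n, G.Adj i (i + 1)) (u v : Fin n) (huv : u ≠ v) :
    ∃ p q : G.Path u v, ∀ w : Fin n,
      w ∈ p.val.support → w ∈ q.val.support → w = u ∨ w = v := by
  set k : ℕ := (v - u).val with hkdef
  have hsub : v - u ≠ 0 := sub_ne_zero.mpr huv.symm
  have hk0 : 0 < k := Nat.pos_of_ne_zero fun h => hsub (Fin.val_injective (by exact h.trans (by simp)))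
  have hkn : k < n := (v - u).isLt
  have hcast : ((k : ℕ) : Fin n) = v - u := Fin.cast_val_eq_self _
  have hup : u + (k : Fin n) = v := by rw [hcast]; ring
  have hcast2 : (((n - k : ℕ)) : Fin n) = -(v - u) := by
    rw [Nat.cast_sub hkn.le, hcast, Fin.natCast_self]; ring
  have hdown : u - ((n - k : ℕ) : Fin n) = v := by rw [hcast2]; ring
  refine ⟨⟨(walkUp hcyc k u).copy rfl hup, ?_⟩,
         ⟨(walkDown hcyc (n - k) u).copy rfl hdown, ?_⟩, ?_⟩
  · rw [SimpleGraph.Walk.isPath_copy]; exact walkUp_isPath hcyc hkn u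
  · rw [SimpleGraph.Walk.isPath_copy]; exact walkDown_isPath hcyc (by omega) u
  · intro w hwp hwq
    simp only [SimpleGraph.Walk.support_copy, walkUp_support, walkDown_support,
      List.mem_map, List.mem_range] at hwp hwq
    obtain ⟨j, hj, rfl⟩ := hwp
    obtain ⟨j', hj', hjj⟩ := hwq
    have h0 : (j : Fin n) + (j' : Fin n) = 0 := by
      have : u + ((j : Fin n) + (j' : Fin n)) = u + 0 := by rw [← add_assoc, ← hjj]; ring
      exact add_left_cancel this
    have hsum : ((j + j' : ℕ) : Fin n) = 0 := by push_cast; exact h0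
    have hdvd : n ∣ j + j' := by rwa [Fin.natCast_eq_zero] at hsum
    by_cases hz : j + j' = 0
    · left
      have : j = 0 := by omega
      rw [this]; simp
    · right
      have hge : n ≤ j + j' := Nat.le_of_dvd (Nat.pos_of_ne_zero hz) hdvd
      have hjk : j = k := by omega
      rw [hjk]; exact hup
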